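/- The limit set Q_∞ of the subdivision scheme satisfies Q_∞ ⊆ F_Λ(Q_∞). -/

import Mathlib

/-! Each level-`ℓ` box containing a point `y ∈ Q_∞` also contains some `f x_ℓ λ_ℓ` with
`x_ℓ ∈ Q_ℓ`, `λ_ℓ ∈ Λ`; as the box diameters shrink, these points converge to `y`. Hence `y` lies
in every compact set `f (Q_ℓ × Λ)`, and Cantor's intersection theorem applied to the fibres
`(Q_ℓ × Λ) ∩ f⁻¹{y}` yields a preimage of `y` in `Q_∞ × Λ`. -/

open Set

def Fpt {n p : ℕ} (f : (Fin n → ℝ) → (Fin p → ℝ) → (Fin n → ℝ))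
    (Λ : Set (Fin p → ℝ)) (x : Fin n → ℝ) : Set (Fin n → ℝ) :=
  (f x) '' Λ

def FSet {n p : ℕ} (f : (Fin n → ℝ) → (Fin p → ℝ) → (Fin n → ℝ))
    (Λ : Set (Fin p → ℝ)) (B : Set (Fin n → ℝ)) : Set (Fin n → ℝ) :=
  ⋃ x ∈ B, Fpt f Λ x

open Filter Topology

lemma FSet_eq_image_prod {n p : ℕ} (f : (Fin n → ℝ) → (Fin p → ℝ) → (Fin n → ℝ))
    (Λ : Set (Fin p → ℝ)) (B : Set (Fin n → ℝ)) :
    FSet f Λ B = (fun z => f z.1 z.2) '' (B ×ˢ Λ) := by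
  ext y
  simp [FSet, Fpt]

lemma tendsto_of_mem_of_diam_lt {α : Type*} [PseudoMetricSpace α] {c : ℕ → Set α}
    (hc : ∀ ℓ, Bornology.IsBounded (c ℓ))
    (hdiam : ∀ ε : ℝ, 0 < ε → ∃ L : ℕ, ∀ ℓ ≥ L, Metric.diam (c ℓ) < ε)
    {z : ℕ → α} {y : α} (hz : ∀ ℓ, z ℓ ∈ c ℓ) (hy : ∀ ℓ, y ∈ c ℓ) :
    Tendsto z atTop (𝓝 y) := by
  rw [Metric.tendsto_atTop]
  intro ε hε
  obtain ⟨L, hL⟩ := hdiam ε hε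
  exact ⟨L, fun ℓ hℓ => (Metric.dist_le_diam_of_mem (hc ℓ) (hz ℓ) (hy ℓ)).trans_lt (hL ℓ hℓ)⟩

section Compactness

variable {X Y : Type*} [TopologicalSpace X] [T2Space X] [TopologicalSpace Y]
  {g : X → Y} {K : ℕ → Set X}

lemma mem_image_iInter_of_forall_mem_image [T1Space Y] (hg : Continuous g) (hK : ∀ ℓ, IsCompact (K ℓ))
    (hanti : Antitone K) {y : Y} (hy : ∀ ℓ, y ∈ g '' K ℓ) : y ∈ g '' ⋂ ℓ, K ℓ := by
  have hfibre : (⋂ ℓ, K ℓ ∩ g ⁻¹' {y}).Nonempty :=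
    IsCompact.nonempty_iInter_of_sequence_nonempty_isCompact_isClosed _
      (fun ℓ => inter_subset_inter_left _ (hanti ℓ.le_succ))
      (fun ℓ => let ⟨x, hx, hgx⟩ := hy ℓ; ⟨x, hx, hgx⟩)
      ((hK 0).inter_right (isClosed_singleton.preimage hg))
      (fun ℓ => (hK ℓ).isClosed.inter (isClosed_singleton.preimage hg))
  obtain ⟨x, hx⟩ := hfibre
  rw [mem_iInter] at hx
  exact ⟨x, mem_iInter.2 fun ℓ => (hx ℓ).1, (hx 0).2⟩

lemma mem_image_iInter_of_tendsto [T2Space Y] (hg : Continuous g) (hK : ∀ ℓ, IsCompact (K ℓ))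
    (hanti : Antitone K) {x : ℕ → X} (hx : ∀ ℓ, x ℓ ∈ K ℓ) {y : Y}
    (hy : Tendsto (g ∘ x) atTop (𝓝 y)) : y ∈ g '' ⋂ ℓ, K ℓ := by
  refine mem_image_iInter_of_forall_mem_image hg hK hanti fun ℓ => ?_
  refine ((hK ℓ).image hg).isClosed.mem_of_tendsto hy ?_
  filter_upwards [eventually_ge_atTop ℓ] with m hm
  exact mem_image_of_mem g (hanti hm (hx m))

end Compactness

theorem stmt4_general {n p : ℕ} (f : (Fin n → ℝ) → (Fin p → ℝ) → (Fin n → ℝ))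
    (Λ : Set (Fin p → ℝ))
    (hΛ : IsCompact Λ)
    (hf : Continuous fun z : (Fin n → ℝ) × (Fin p → ℝ) => f z.1 z.2)
    (C : ℕ → Finset (Set (Fin n → ℝ)))
    (hcomp : ∀ ℓ : ℕ, ∀ c ∈ C ℓ, IsCompact c)
    (Qs : ℕ → Set (Fin n → ℝ))
    (hQs : ∀ ℓ : ℕ, Qs ℓ = ⋃ c ∈ C ℓ, c)
    (hnested : ∀ ℓ : ℕ, Qs (ℓ + 1) ⊆ Qs ℓ)
    -- the box diameters tend to zero:
    (hdiam : ∀ ε : ℝ, 0 < ε → ∃ L : ℕ, ∀ ℓ ≥ L, ∀ c ∈ C ℓ, Metric.diam c < ε)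
    -- the selection step: every retained box contains the image of a point of a
    -- retained box under some admissible parameter:
    (hsel : ∀ ℓ : ℕ, ∀ c ∈ C ℓ, ∃ c' ∈ C ℓ, ∃ x ∈ c', ∃ l ∈ Λ, f x l ∈ c) :
    (⋂ ℓ : ℕ, Qs ℓ) ⊆ FSet f Λ (⋂ ℓ : ℕ, Qs ℓ) := by
  intro y hy
  have hbox : ∀ ℓ, ∃ c ∈ C ℓ, y ∈ c := fun ℓ => by
    simpa [hQs ℓ] using mem_iInter.1 hy ℓ
  choose c hcC hyc using hbox
  have hpre : ∀ ℓ, ∃ z ∈ Qs ℓ ×ˢ Λ, f z.1 z.2 ∈ c ℓ := fun ℓ => by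
    obtain ⟨c', hc', x, hx, l, hl, hfl⟩ := hsel ℓ (c ℓ) (hcC ℓ)
    exact ⟨(x, l), ⟨by rw [hQs]; exact mem_biUnion hc' hx, hl⟩, hfl⟩
  choose z hz hfz using hpre
  have hQs_compact : ∀ ℓ, IsCompact (Qs ℓ) := fun ℓ => by
    rw [hQs]; exact (C ℓ).finite_toSet.isCompact_biUnion (hcomp ℓ)
  have hlim : Tendsto (fun ℓ => f (z ℓ).1 (z ℓ).2) atTop (𝓝 y) :=
    tendsto_of_mem_of_diam_lt (fun ℓ => (hcomp ℓ _ (hcC ℓ)).isBounded)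
      (fun ε hε => let ⟨L, hL⟩ := hdiam ε hε; ⟨L, fun ℓ hℓ => hL ℓ hℓ _ (hcC ℓ)⟩) hfz hyc
  have hmem := mem_image_iInter_of_tendsto hf (fun ℓ => (hQs_compact ℓ).prod hΛ)
    (fun _ _ hij => prod_mono ((antitone_nat_of_succ_le hnested) hij) le_rfl) hz hlim
  rw [FSet_eq_image_prod]
  refine image_mono (fun w hw => ?_) hmem
  rw [mem_iInter] at hw
  exact ⟨mem_iInter.2 fun ℓ => (hw ℓ).1, (hw 0).2⟩

/-- the limit set `Q_∞ = ⋂_ℓ Q_ℓ` of the subdivision scheme satisfies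
`Q_∞ ⊆ F_Λ(Q_∞)`. -/
theorem stmt4 {n p : ℕ} (f : (Fin n → ℝ) → (Fin p → ℝ) → (Fin n → ℝ))
    (Λ : Set (Fin p → ℝ)) (Q : Set (Fin n → ℝ))
    (hΛ : IsCompact Λ) (hQ : IsCompact Q)
    (hf : Continuous fun z : (Fin n → ℝ) × (Fin p → ℝ) => f z.1 z.2)
    (C : ℕ → Finset (Set (Fin n → ℝ)))
    (hcomp : ∀ ℓ : ℕ, ∀ c ∈ C ℓ, IsCompact c)
    (hnonempty : ∀ ℓ : ℕ, ∀ c ∈ C ℓ, (c : Set (Fin n → ℝ)).Nonempty)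
    (Qs : ℕ → Set (Fin n → ℝ))
    (hQs : ∀ ℓ : ℕ, Qs ℓ = ⋃ c ∈ C ℓ, c)
    -- the coverings stay inside the compact set `Q` and are nested:
    (hQsub : ∀ ℓ : ℕ, Qs ℓ ⊆ Q)
    (hnested : ∀ ℓ : ℕ, Qs (ℓ + 1) ⊆ Qs ℓ)
    -- the box diameters tend to zero:
    (hdiam : ∀ ε : ℝ, 0 < ε → ∃ L : ℕ, ∀ ℓ ≥ L, ∀ c ∈ C ℓ, Metric.diam c < ε)
    -- the selection step: every retained box contains the image of a point of a
    -- retained box under some admissible parameter: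
    (hsel : ∀ ℓ : ℕ, ∀ c ∈ C ℓ, ∃ c' ∈ C ℓ, ∃ x ∈ c', ∃ l ∈ Λ, f x l ∈ c) :
    (⋂ ℓ : ℕ, Qs ℓ) ⊆ FSet f Λ (⋂ ℓ : ℕ, Qs ℓ) :=
  stmt4_general f Λ hΛ hf C hcomp Qs hQs hnested hdiam hsel
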